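/- For the root system G2, with fundamental weights π1=(0,-1,1) and π2=(-1,-1,2): for every dominant weight λ = c1π1 + c2π2 with c1,c2 nonnegative integers and λ ∉ {0, π1}, the set M_G2(λ) contains a subset which is not saturated; in particular M_G2(λ) is not hereditarily normal. -/

import Mathlib

namespace TorusNormal

/-- `V n` is the rational vector space `ℚ^n`. -/
abbrev V (n : ℕ) := Fin n → ℚ

/-- The standard scalar product on `ℚ^n`. -/
def dot {n : ℕ} (x y : V n) : ℚ := ∑ i, x i * y i

lemma dot_add_right {n : ℕ} (α x y : V n) : dot α (x + y) = dot α x + dot α y := by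
  simp [dot, mul_add, Finset.sum_add_distrib]

lemma dot_smul_right {n : ℕ} (α : V n) (c : ℚ) (x : V n) : dot α (c • x) = c * dot α x := by
  simp [dot, Finset.mul_sum, mul_left_comm]

/-- The reflection `s_α : x ↦ x - (2(α,x)/(α,α))·α`, as a linear map. -/
def reflLin {n : ℕ} (α : V n) : V n →ₗ[ℚ] V n where
  toFun x := x - ((2 * dot α x) / dot α α) • α
  map_add' x y := by
    try dsimp only
    rw [dot_add_right,
      show (2 * (dot α x + dot α y)) / dot α α
        = (2 * dot α x) / dot α α + (2 * dot α y) / dot α α by ring, add_smul]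
    abel
  map_smul' c x := by
    try dsimp only
    rw [dot_smul_right]
    simp only [RingHom.id_apply]
    rw [smul_sub, smul_smul]
    congr 1
    congr 1
    ring

/-- The Weyl group of a root system `Φ`: the subgroup of `GL(ℚ^n)` generated by the
reflections `s_α`, `α ∈ Φ`. -/
def weylGroup {n : ℕ} (Φ : Set (V n)) : Subgroup (Module.End ℚ (V n))ˣ :=
  Subgroup.closure {g | ∃ α ∈ Φ, g.val = reflLin α}

/-- The orbit of `l` under the Weyl group of `Φ`. -/
def weylOrbit {n : ℕ} (Φ : Set (V n)) (l : V n) : Set (V n) :=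
  {x | ∃ g ∈ weylGroup Φ, x = g.val l}

/-- The weight polytope `P(λ)`: the convex hull of the Weyl orbit of `λ`. -/
def weightPolytope {n : ℕ} (Φ : Set (V n)) (l : V n) : Set (V n) :=
  convexHull ℚ (weylOrbit Φ l)

/-- `M(λ) = (λ + Ξ) ∩ P(λ)`, where `Ξ` is the root lattice (the ℤ-span of `Φ`). -/
def Mset {n : ℕ} (Φ : Set (V n)) (l : V n) : Set (V n) :=
  {x | x - l ∈ Submodule.span ℤ Φ ∧ x ∈ weightPolytope Φ l}

/-- `v` is a ℚ≥0-linear combination of elements of `S`. -/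
def InCone {n : ℕ} (S : Set (V n)) (v : V n) : Prop :=
  ∃ (t : Finset (V n)) (c : V n → ℚ),
    ↑t ⊆ S ∧ (∀ x ∈ t, 0 ≤ c x) ∧ v = ∑ x ∈ t, c x • x

/-- A set `S ⊆ ℚ^n` is saturated if every vector in the intersection of the ℤ-linear span
of `S` with the ℚ≥0-cone of `S` is a ℤ≥0-linear combination of elements of `S`
(equivalently, lies in the additive submonoid generated by `S`). -/
def IsSaturated {n : ℕ} (S : Set (V n)) : Prop :=
  ∀ v : V n, v ∈ Submodule.span ℤ S → InCone S v → v ∈ AddSubmonoid.closure S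

/-- A set is hereditarily normal if every subset is saturated. -/
def HereditarilyNormal {n : ℕ} (S : Set (V n)) : Prop :=
  ∀ T : Set (V n), T ⊆ S → IsSaturated T


/-- The root system `G₂`, realized in the subspace `{ℓ ∈ ℚ³ : ℓ₁+ℓ₂+ℓ₃ = 0}`. -/
def g2roots : Set (V 3) :=
  {x | x = ![1, -1, 0] ∨ x = ![-1, 1, 0] ∨ x = ![1, 0, -1] ∨ x = ![-1, 0, 1] ∨
       x = ![0, 1, -1] ∨ x = ![0, -1, 1] ∨ x = ![2, -1, -1] ∨ x = ![-2, 1, 1] ∨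
       x = ![-1, 2, -1] ∨ x = ![1, -2, 1] ∨ x = ![-1, -1, 2] ∨ x = ![1, 1, -2]}

def piG2_1 : V 3 := ![0, -1, 1]
def piG2_2 : V 3 := ![-1, -1, 2]

/- ## Auxiliary material -/

lemma reflLin_apply {n : ℕ} (α x : V n) :
    reflLin α x = x - ((2 * dot α x) / dot α α) • α := rfl

lemma dot_sub_right {n : ℕ} (α x y : V n) : dot α (x - y) = dot α x - dot α y := by
  simp [dot, mul_sub, Finset.sum_sub_distrib]

lemma reflLin_invol {n : ℕ} (α : V n) (x : V n) : reflLin α (reflLin α x) = x := by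
  rcases eq_or_ne (dot α α) 0 with h | h
  · simp [reflLin_apply, h]
  · rw [reflLin_apply, reflLin_apply, dot_sub_right, dot_smul_right,
      show dot α x - 2 * dot α x / dot α α * dot α α = -dot α x by field_simp; ring,
      show (2 * -dot α x) / dot α α = -(2 * dot α x / dot α α) by ring, neg_smul]
    abel

/-- The reflection `s_α` as a unit of `End ℚ (V n)` (it is an involution). -/
def sUnit {n : ℕ} (α : V n) : (Module.End ℚ (V n))ˣ :=
  ⟨reflLin α, reflLin α,
    LinearMap.ext fun x => reflLin_invol α x,
    LinearMap.ext fun x => reflLin_invol α x⟩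

lemma sUnit_mem {n : ℕ} {Φ : Set (V n)} {α : V n} (h : α ∈ Φ) : sUnit α ∈ weylGroup Φ :=
  Subgroup.subset_closure ⟨α, h, rfl⟩

lemma orbit_self {n : ℕ} (Φ : Set (V n)) (l : V n) : l ∈ weylOrbit Φ l :=
  ⟨1, one_mem _, by simp⟩

lemma orbit_step {n : ℕ} {Φ : Set (V n)} {l x : V n} (hx : x ∈ weylOrbit Φ l)
    {α : V n} (hα : α ∈ Φ) {y : V n} (hy : reflLin α x = y) : y ∈ weylOrbit Φ l := by
  obtain ⟨g, hg, rfl⟩ := hx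
  refine ⟨sUnit α * g, mul_mem (sUnit_mem hα) hg, ?_⟩
  rw [Units.val_mul, Module.End.mul_apply]
  exact hy.symm

lemma mem_g2_r12 : (![1, -1, 0] : V 3) ∈ g2roots := Or.inl rfl
lemma mem_g2_r13 : (![1, 0, -1] : V 3) ∈ g2roots := Or.inr (Or.inr (Or.inl rfl))
lemma mem_g2_r23 : (![0, 1, -1] : V 3) ∈ g2roots := Or.inr (Or.inr (Or.inr (Or.inr (Or.inl rfl))))
lemma mem_g2_rL : (![1, 1, -2] : V 3) ∈ g2roots :=
  Or.inr (Or.inr (Or.inr (Or.inr (Or.inr (Or.inr (Or.inr (Or.inr (Or.inr (Or.inr (Or.inr rfl))))))))))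

/-- For every dominant weight `λ = c₁π₁ + c₂π₂` of `G₂` with `λ ∉ {0, π₁}`, the set
`M_{G₂}(λ)` contains a non-saturated subset; in particular it is not hereditarily
normal. -/
theorem g2_not_hereditarily_normal (c1 c2 : ℕ) (l : V 3)
    (hl : l = (c1 : ℚ) • piG2_1 + (c2 : ℚ) • piG2_2)
    (h0 : l ≠ 0) (h1 : l ≠ piG2_1) :
    (∃ T ⊆ Mset g2roots l, ¬ IsSaturated T) ∧ ¬ HereditarilyNormal (Mset g2roots l) := by
  -- the key inequality `a + 2b ≥ 2`
  have h00 : ¬(c1 = 0 ∧ c2 = 0) := by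
    rintro ⟨rfl, rfl⟩
    apply h0
    rw [hl]; simp
  have h10 : ¬(c1 = 1 ∧ c2 = 0) := by
    rintro ⟨rfl, rfl⟩
    apply h1
    rw [hl]; simp
  -- notation
  set a : ℚ := (c1 : ℚ) with ha
  set b : ℚ := (c2 : ℚ) with hb
  have hlv : l = ![-b, -(a+b), a+2*b] := by
    funext i
    rw [hl]
    fin_cases i <;> simp [piG2_1, piG2_2] <;> ring
  have hNnat : 2 ≤ c1 + 2 * c2 := by omega
  have hN : (2:ℚ) ≤ a + 2*b := by
    rw [ha, hb]; exact_mod_cast hNnat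
  have hNpos : (0:ℚ) < a + 2*b := by linarith
  -- reflection computations
  have hA : reflLin ![1,0,-1] l = ![a+2*b, -(a+b), -b] := by
    rw [hlv]; funext i; rw [reflLin_apply]
    fin_cases i <;> simp [dot, Fin.sum_univ_three] <;> ring
  have hB : reflLin ![0,1,-1] (![a+2*b, -(a+b), -b] : V 3) = ![a+2*b, -b, -(a+b)] := by
    funext i; rw [reflLin_apply]
    fin_cases i <;> simp [dot, Fin.sum_univ_three] <;> ring
  have hE : reflLin ![1,1,-2] (![a+2*b, -(a+b), -b] : V 3) = ![a+b, -(a+2*b), b] := by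
    funext i; rw [reflLin_apply]
    fin_cases i <;> simp [dot, Fin.sum_univ_three] <;> ring
  have hF : reflLin ![1,-1,0] (![a+b, -(a+2*b), b] : V 3) = ![-(a+2*b), a+b, b] := by
    funext i; rw [reflLin_apply]
    fin_cases i <;> simp [dot, Fin.sum_univ_three] <;> ring
  have hG : reflLin ![1,1,-2] (![a+2*b, -b, -(a+b)] : V 3) = ![b, -(a+2*b), a+b] := by
    funext i; rw [reflLin_apply]
    fin_cases i <;> simp [dot, Fin.sum_univ_three] <;> ring
  have hH : reflLin ![1,-1,0] (![b, -(a+2*b), a+b] : V 3) = ![-(a+2*b), b, a+b] := by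
    funext i; rw [reflLin_apply]
    fin_cases i <;> simp [dot, Fin.sum_univ_three] <;> ring
  have hI : reflLin ![1,-1,0] (![a+2*b, -(a+b), -b] : V 3) = ![-(a+b), a+2*b, -b] := by
    funext i; rw [reflLin_apply]
    fin_cases i <;> simp [dot, Fin.sum_univ_three] <;> ring
  have hJ : reflLin ![0,1,-1] l = ![-b, a+2*b, -(a+b)] := by
    rw [hlv]; funext i; rw [reflLin_apply]
    fin_cases i <;> simp [dot, Fin.sum_univ_three] <;> ring
  have hK : reflLin ![1,-1,0] l = ![-(a+b), -b, a+2*b] := by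
    rw [hlv]; funext i; rw [reflLin_apply]
    fin_cases i <;> simp [dot, Fin.sum_univ_three] <;> ring
  have hC : reflLin ![1,1,-2] l = ![a+b, b, -(a+2*b)] := by
    rw [hlv]; funext i; rw [reflLin_apply]
    fin_cases i <;> simp [dot, Fin.sum_univ_three] <;> ring
  have hD : reflLin ![1,-1,0] (![a+b, b, -(a+2*b)] : V 3) = ![b, a+b, -(a+2*b)] := by
    funext i; rw [reflLin_apply]
    fin_cases i <;> simp [dot, Fin.sum_univ_three] <;> ring
  -- orbit points
  have olv : (![-b, -(a+b), a+2*b] : V 3) ∈ weylOrbit g2roots l := by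
    rw [← hlv]; exact orbit_self _ _
  have op1 : (![a+2*b, -(a+b), -b] : V 3) ∈ weylOrbit g2roots l :=
    orbit_step (orbit_self _ _) mem_g2_r13 hA
  have op2 : (![a+2*b, -b, -(a+b)] : V 3) ∈ weylOrbit g2roots l :=
    orbit_step op1 mem_g2_r23 hB
  have onq1 : (![a+b, -(a+2*b), b] : V 3) ∈ weylOrbit g2roots l :=
    orbit_step op1 mem_g2_rL hE
  have onp1 : (![-(a+2*b), a+b, b] : V 3) ∈ weylOrbit g2roots l :=
    orbit_step onq1 mem_g2_r12 hF
  have onq2 : (![b, -(a+2*b), a+b] : V 3) ∈ weylOrbit g2roots l :=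
    orbit_step op2 mem_g2_rL hG
  have onp2 : (![-(a+2*b), b, a+b] : V 3) ∈ weylOrbit g2roots l :=
    orbit_step onq2 mem_g2_r12 hH
  have oq1 : (![-(a+b), a+2*b, -b] : V 3) ∈ weylOrbit g2roots l :=
    orbit_step op1 mem_g2_r12 hI
  have oq2 : (![-b, a+2*b, -(a+b)] : V 3) ∈ weylOrbit g2roots l :=
    orbit_step (orbit_self _ _) mem_g2_r23 hJ
  have or1 : (![-(a+b), -b, a+2*b] : V 3) ∈ weylOrbit g2roots l :=
    orbit_step (orbit_self _ _) mem_g2_r12 hK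
  have onr1 : (![a+b, b, -(a+2*b)] : V 3) ∈ weylOrbit g2roots l :=
    orbit_step (orbit_self _ _) mem_g2_rL hC
  have onlv : (![b, a+b, -(a+2*b)] : V 3) ∈ weylOrbit g2roots l :=
    orbit_step onr1 mem_g2_r12 hD
  -- polytope memberships
  have hw0 : ∀ i ∈ (Finset.univ : Finset (Fin 4)),
      (0:ℚ) ≤ (![a+2*b+2, a+2*b+2, a+2*b-2, a+2*b-2] : Fin 4 → ℚ) i := by
    intro i _; fin_cases i <;> simp <;> linarith
  have hsum4 : ∑ i : Fin 4, (![a+2*b+2, a+2*b+2, a+2*b-2, a+2*b-2] : Fin 4 → ℚ) i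
      = 4*(a+2*b) := by
    simp [Fin.sum_univ_four]; ring
  have hws4 : (0:ℚ) < ∑ i : Fin 4, (![a+2*b+2, a+2*b+2, a+2*b-2, a+2*b-2] : Fin 4 → ℚ) i := by
    rw [hsum4]; linarith
  have h4ne : (4*(a+2*b) : ℚ) ≠ 0 := by positivity
  have hu : (![2,-1,-1] : V 3) ∈ weightPolytope g2roots l := by
    have h := Finset.centerMass_mem_convexHull (Finset.univ : Finset (Fin 4))
      (w := ![a+2*b+2, a+2*b+2, a+2*b-2, a+2*b-2])
      hw0 hws4
      (z := ![![a+2*b, -(a+b), -b], ![a+2*b, -b, -(a+b)], ![-(a+2*b), a+b, b], ![-(a+2*b), b, a+b]])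
      (by intro i _; fin_cases i
          · exact op1
          · exact op2
          · exact onp1
          · exact onp2)
    have e : (Finset.univ : Finset (Fin 4)).centerMass
        ![a+2*b+2, a+2*b+2, a+2*b-2, a+2*b-2]
        ![![a+2*b, -(a+b), -b], ![a+2*b, -b, -(a+b)], ![-(a+2*b), a+b, b], ![-(a+2*b), b, a+b]]
        = ![2,-1,-1] := by
      rw [Finset.centerMass, hsum4, inv_smul_eq_iff₀ h4ne]
      funext j
      rw [Finset.sum_apply]
      simp only [Fin.sum_univ_four, Pi.smul_apply, smul_eq_mul]
      fin_cases j <;>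
        simp only [Fin.zero_eta, Fin.mk_one, Fin.isValue, Matrix.cons_val_zero,
          Matrix.cons_val_one, Matrix.head_cons, Matrix.cons_val_two, Matrix.tail_cons,
          Matrix.cons_val_three, Pi.zero_apply,
          show ((⟨2, by norm_num⟩ : Fin 3)) = 2 from rfl,
          show ((⟨2, by norm_num⟩ : Fin 4)) = 2 from rfl] <;>
        ring
    exact e ▸ h
  have hww : (![1,-2,1] : V 3) ∈ weightPolytope g2roots l := by
    have h := Finset.centerMass_mem_convexHull (Finset.univ : Finset (Fin 4))
      (w := ![a+2*b+2, a+2*b+2, a+2*b-2, a+2*b-2])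
      hw0 hws4
      (z := ![![a+b, -(a+2*b), b], ![b, -(a+2*b), a+b], ![-(a+b), a+2*b, -b], ![-b, a+2*b, -(a+b)]])
      (by intro i _; fin_cases i
          · exact onq1
          · exact onq2
          · exact oq1
          · exact oq2)
    have e : (Finset.univ : Finset (Fin 4)).centerMass
        ![a+2*b+2, a+2*b+2, a+2*b-2, a+2*b-2]
        ![![a+b, -(a+2*b), b], ![b, -(a+2*b), a+b], ![-(a+b), a+2*b, -b], ![-b, a+2*b, -(a+b)]]
        = ![1,-2,1] := by
      rw [Finset.centerMass, hsum4, inv_smul_eq_iff₀ h4ne]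
      funext j
      rw [Finset.sum_apply]
      simp only [Fin.sum_univ_four, Pi.smul_apply, smul_eq_mul]
      fin_cases j <;>
        simp only [Fin.zero_eta, Fin.mk_one, Fin.isValue, Matrix.cons_val_zero,
          Matrix.cons_val_one, Matrix.head_cons, Matrix.cons_val_two, Matrix.tail_cons,
          Matrix.cons_val_three, Pi.zero_apply,
          show ((⟨2, by norm_num⟩ : Fin 3)) = 2 from rfl,
          show ((⟨2, by norm_num⟩ : Fin 4)) = 2 from rfl] <;>
        ring
    exact e ▸ h
  have ht3 : (![1,1,-2] : V 3) ∈ weightPolytope g2roots l := by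
    have h := Finset.centerMass_mem_convexHull (Finset.univ : Finset (Fin 4))
      (w := ![a+2*b+2, a+2*b+2, a+2*b-2, a+2*b-2])
      hw0 hws4
      (z := ![![a+b, b, -(a+2*b)], ![b, a+b, -(a+2*b)], ![-(a+b), -b, a+2*b], ![-b, -(a+b), a+2*b]])
      (by intro i _; fin_cases i
          · exact onr1
          · exact onlv
          · exact or1
          · exact olv)
    have e : (Finset.univ : Finset (Fin 4)).centerMass
        ![a+2*b+2, a+2*b+2, a+2*b-2, a+2*b-2]
        ![![a+b, b, -(a+2*b)], ![b, a+b, -(a+2*b)], ![-(a+b), -b, a+2*b], ![-b, -(a+b), a+2*b]]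
        = ![1,1,-2] := by
      rw [Finset.centerMass, hsum4, inv_smul_eq_iff₀ h4ne]
      funext j
      rw [Finset.sum_apply]
      simp only [Fin.sum_univ_four, Pi.smul_apply, smul_eq_mul]
      fin_cases j <;>
        simp only [Fin.zero_eta, Fin.mk_one, Fin.isValue, Matrix.cons_val_zero,
          Matrix.cons_val_one, Matrix.head_cons, Matrix.cons_val_two, Matrix.tail_cons,
          Matrix.cons_val_three, Pi.zero_apply,
          show ((⟨2, by norm_num⟩ : Fin 3)) = 2 from rfl,
          show ((⟨2, by norm_num⟩ : Fin 4)) = 2 from rfl] <;>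
        ring
    exact e ▸ h
  have h0m : (0 : V 3) ∈ weightPolytope g2roots l := by
    have h := Finset.centerMass_mem_convexHull (Finset.univ : Finset (Fin 2))
      (w := (![1, 1] : Fin 2 → ℚ))
      (by intro i _; fin_cases i <;> norm_num)
      (by norm_num [Fin.sum_univ_two])
      (z := ![![-b, -(a+b), a+2*b], ![b, a+b, -(a+2*b)]])
      (by intro i _; fin_cases i
          · exact olv
          · exact onlv)
    have e : (Finset.univ : Finset (Fin 2)).centerMass (![1, 1] : Fin 2 → ℚ)
        ![![-b, -(a+b), a+2*b], ![b, a+b, -(a+2*b)]] = (0 : V 3) := by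
      rw [Finset.centerMass, show ∑ i : Fin 2, (![1,1] : Fin 2 → ℚ) i = 2 by
        norm_num [Fin.sum_univ_two], inv_smul_eq_iff₀ (by norm_num : (2:ℚ) ≠ 0)]
      funext j
      rw [Finset.sum_apply]
      simp only [Fin.sum_univ_two, Pi.smul_apply, smul_eq_mul]
      fin_cases j <;>
        simp only [Fin.zero_eta, Fin.mk_one, Fin.isValue, Matrix.cons_val_zero,
          Matrix.cons_val_one, Matrix.head_cons, Matrix.cons_val_two, Matrix.tail_cons,
          Matrix.cons_val_three, Pi.zero_apply,
          show ((⟨2, by norm_num⟩ : Fin 3)) = 2 from rfl,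
          show ((⟨2, by norm_num⟩ : Fin 4)) = 2 from rfl] <;>
        ring
    exact e ▸ h
  have ht2 : (![1,-1,0] : V 3) ∈ weightPolytope g2roots l := by
    have h := (convex_convexHull ℚ (weylOrbit g2roots l)).centerMass_mem
      (t := (Finset.univ : Finset (Fin 3)))
      (w := (![1, 1, 1] : Fin 3 → ℚ))
      (z := ![![2,-1,-1], ![1,-2,1], 0])
      (by intro i _; fin_cases i <;> norm_num)
      (by norm_num [Fin.sum_univ_three, Matrix.cons_val_two, Matrix.tail_cons, Matrix.head_cons])
      (by intro i _; fin_cases i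
          · exact hu
          · exact hww
          · exact h0m)
    have e : (Finset.univ : Finset (Fin 3)).centerMass (![1,1,1] : Fin 3 → ℚ)
        ![![2,-1,-1], ![1,-2,1], (0 : V 3)] = ![1,-1,0] := by
      rw [Finset.centerMass, show ∑ i : Fin 3, (![1,1,1] : Fin 3 → ℚ) i = 3 by
        norm_num [Fin.sum_univ_three, Matrix.cons_val_two, Matrix.tail_cons, Matrix.head_cons], inv_smul_eq_iff₀ (by norm_num : (3:ℚ) ≠ 0)]
      funext j
      rw [Finset.sum_apply]
      simp only [Fin.sum_univ_three, Pi.smul_apply, smul_eq_mul]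
      fin_cases j <;>
        simp only [Fin.zero_eta, Fin.mk_one, Fin.isValue, Matrix.cons_val_zero,
          Matrix.cons_val_one, Matrix.head_cons, Matrix.cons_val_two, Matrix.tail_cons,
          Matrix.cons_val_three, Pi.zero_apply,
          show ((⟨2, by norm_num⟩ : Fin 3)) = 2 from rfl,
          show ((⟨2, by norm_num⟩ : Fin 4)) = 2 from rfl] <;>
        ring
    exact e ▸ h
  -- root-lattice (span) memberships
  have spanmem : ∀ x y : ℤ,
      (x : ℚ) • (![1,0,-1] : V 3) + (y : ℚ) • (![0,1,-1] : V 3) ∈ Submodule.span ℤ g2roots := by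
    intro x y
    have m13 := Submodule.subset_span (R := ℤ) (s := g2roots) mem_g2_r13
    have m23 := Submodule.subset_span (R := ℤ) (s := g2roots) mem_g2_r23
    have e13 : (x : ℚ) • (![1,0,-1] : V 3) = x • (![1,0,-1] : V 3) := by
      funext i; simp [zsmul_eq_mul]
    have e23 : (y : ℚ) • (![0,1,-1] : V 3) = y • (![0,1,-1] : V 3) := by
      funext i; simp [zsmul_eq_mul]
    rw [e13, e23]
    exact Submodule.add_mem _ (Submodule.smul_mem _ _ m13) (Submodule.smul_mem _ _ m23)
  have hsp1 : (![1,-2,1] : V 3) - l ∈ Submodule.span ℤ g2roots := by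
    have e : (![1,-2,1] : V 3) - l
        = ((1 + c2 : ℤ) : ℚ) • (![1,0,-1] : V 3) + (((c1:ℤ) + c2 - 2 : ℤ) : ℚ) • (![0,1,-1] : V 3) := by
      rw [hlv]; funext i; fin_cases i <;> simp [ha, hb] <;> push_cast <;> ring
    rw [e]; exact spanmem _ _
  have hsp2 : (![1,-1,0] : V 3) - l ∈ Submodule.span ℤ g2roots := by
    have e : (![1,-1,0] : V 3) - l
        = ((1 + c2 : ℤ) : ℚ) • (![1,0,-1] : V 3) + (((c1:ℤ) + c2 - 1 : ℤ) : ℚ) • (![0,1,-1] : V 3) := by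
      rw [hlv]; funext i; fin_cases i <;> simp [ha, hb] <;> push_cast <;> ring
    rw [e]; exact spanmem _ _
  have hsp3 : (![1,1,-2] : V 3) - l ∈ Submodule.span ℤ g2roots := by
    have e : (![1,1,-2] : V 3) - l
        = ((1 + c2 : ℤ) : ℚ) • (![1,0,-1] : V 3) + (((c1:ℤ) + c2 + 1 : ℤ) : ℚ) • (![0,1,-1] : V 3) := by
      rw [hlv]; funext i; fin_cases i <;> simp [ha, hb] <;> push_cast <;> ring
    rw [e]; exact spanmem _ _
  -- the non-saturated subset
  set T : Set (V 3) := {![1,-2,1], ![1,-1,0], ![1,1,-2]} with hT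
  have hm1 : (![1,-2,1] : V 3) ∈ T := Set.mem_insert _ _
  have hm2 : (![1,-1,0] : V 3) ∈ T := Set.mem_insert_of_mem _ (Set.mem_insert _ _)
  have hm3 : (![1,1,-2] : V 3) ∈ T :=
    Set.mem_insert_of_mem _ (Set.mem_insert_of_mem _ rfl)
  have hTsub : T ⊆ Mset g2roots l := by
    intro x hx
    rcases hx with rfl | rfl | rfl
    · exact ⟨hsp1, hww⟩
    · exact ⟨hsp2, ht2⟩
    · exact ⟨hsp3, ht3⟩
  have hns : ¬ IsSaturated T := by
    intro hsat
    have hvspan : (![1,0,-1] : V 3) ∈ Submodule.span ℤ T := by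
      have e : (![1,0,-1] : V 3) = (2:ℤ) • (![1,-1,0] : V 3) + (-1:ℤ) • (![1,-2,1] : V 3) := by
        funext i; fin_cases i <;> simp [zsmul_eq_mul] <;> ring
      rw [e]
      exact Submodule.add_mem _
        (Submodule.smul_mem _ _ (Submodule.subset_span hm2))
        (Submodule.smul_mem _ _ (Submodule.subset_span hm1))
    have hne13 : (![1,-2,1] : V 3) ≠ ![1,1,-2] := by
      intro h
      have := congrFun h 1
      norm_num at this
    have hvcone : InCone T ![1,0,-1] := by
      refine ⟨{![1,-2,1], ![1,1,-2]}, fun x => if x = ![1,-2,1] then 1/3 else 2/3, ?_, ?_, ?_⟩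
      · intro x hx
        simp only [Finset.coe_insert, Finset.coe_singleton, Set.mem_insert_iff,
          Set.mem_singleton_iff] at hx
        rcases hx with rfl | rfl
        · exact hm1
        · exact hm3
      · intro x _
        dsimp only
        split_ifs <;> norm_num
      · rw [Finset.sum_pair hne13]
        dsimp only
        rw [if_pos rfl, if_neg (Ne.symm hne13)]
        funext i; fin_cases i <;> norm_num
    have hv := hsat _ hvspan hvcone
    -- the monoid generated by T
    set S : AddSubmonoid (V 3) :=
      { carrier := {x | ∃ n1 n2 n3 : ℕ,
          x = (n1:ℚ) • (![1,-2,1] : V 3) + (n2:ℚ) • (![1,-1,0] : V 3) + (n3:ℚ) • (![1,1,-2] : V 3)}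
        zero_mem' := ⟨0, 0, 0, by simp⟩
        add_mem' := by
          rintro x y ⟨m1, m2, m3, rfl⟩ ⟨k1, k2, k3, rfl⟩
          refine ⟨m1 + k1, m2 + k2, m3 + k3, ?_⟩
          push_cast [add_smul]
          abel } with hS
    have hle : AddSubmonoid.closure T ≤ S := by
      rw [AddSubmonoid.closure_le]
      intro x hx
      rcases hx with rfl | rfl | rfl
      · exact ⟨1, 0, 0, by simp⟩
      · exact ⟨0, 1, 0, by simp⟩
      · exact ⟨0, 0, 1, by simp⟩
    obtain ⟨n1, n2, n3, heq⟩ := hle hv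
    have e0 := congrFun heq 0
    have e1 := congrFun heq 1
    simp [Pi.add_apply, Pi.smul_apply, smul_eq_mul] at e0 e1
    have A : n1 + n2 + n3 = 1 := by
      have : ((n1 + n2 + n3 : ℕ) : ℚ) = 1 := by push_cast; linarith
      exact_mod_cast this
    have B : 2 * n1 + n2 = n3 := by
      have : ((2 * n1 + n2 : ℕ) : ℚ) = ((n3 : ℕ) : ℚ) := by push_cast; linarith
      exact_mod_cast this
    omega
  exact ⟨⟨T, hTsub, hns⟩, fun h => hns (h T hTsub)⟩

end TorusNormal
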